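/- Let T be a triangulated category with a bounded t-structure, G an object of T, and d a positive integer. Then there exists an integer N = N(d) > 0 such that for every integer a and every object F of coprod_d(G(-∞,∞)), there exist an object F' in coprod_d(G(-∞,∞)) ∩ T^{≥ a - N} and a morphism F → F' which induces isomorphisms on H^n for all n ≥ a. -/

import Mathlib

/-!
Common preamble: generation in triangulated categories, truncation triangles for
t-structures, "isomorphism in degrees ≥ a", levels `⟨G⟩_n`, `coprod_n`,
and Rouquier dimension.
-/

open CategoryTheory Limits Pretriangulated Triangulated

namespace RouquierApprox

variable {C : Type*} [Category C] [Preadditive C] [HasZeroObject C] [HasShift C ℤ]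
  [∀ (n : ℤ), (shiftFunctor C n).Additive] [Pretriangulated C]

/-- A t-structure is non-degenerate if `⋂ₙ T^{≥n} = 0 = ⋂ₙ T^{≤-n}`. -/
def IsNonDegenerate (t : TStructure C) : Prop :=
  (∀ X : C, (∀ n : ℤ, t.ge n X) → IsZero X) ∧ (∀ X : C, (∀ n : ℤ, t.le n X) → IsZero X)

/-- A t-structure is bounded if every object is bounded. -/
def IsBoundedTStructure (t : TStructure C) : Prop :=
  ∀ X : C, ∃ n : ℤ, 0 < n ∧ t.le n X ∧ t.ge (-n) X

/-- A choice of truncation triangle `τ_{≤ a-1} A ⟶ A ⟶ τ_{≥ a} A ⟶ (τ_{≤ a-1} A)[1]`. -/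
structure TruncGETriangle (t : TStructure C) (a : ℤ) (A : C) where
  left : C
  right : C
  left_le : t.le (a - 1) left
  right_ge : t.ge a right
  ι : left ⟶ A
  π : A ⟶ right
  δ : right ⟶ left⟦(1 : ℤ)⟧
  dist : Triangle.mk ι π δ ∈ distTriang C

/-- `f : A ⟶ B` induces isomorphisms on the cohomology objects `H^n` (with respect to
the t-structure `t`) for all `n ≥ a`; for a non-degenerate t-structure this is
equivalently expressed by saying that any morphism induced by `f` between the
truncations `τ_{≥ a} A ⟶ τ_{≥ a} B` is an isomorphism. -/
def IsIsoInDegreesGE (t : TStructure C) (a : ℤ) {A B : C} (f : A ⟶ B) : Prop :=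
  ∀ (TA : TruncGETriangle t a A) (TB : TruncGETriangle t a B) (g : TA.right ⟶ TB.right),
    TA.π ≫ g = f ≫ TB.π → IsIso g

/-- `P` is a retract (direct summand) of `F`. -/
def IsRetract (P F : C) : Prop := ∃ (i : P ⟶ F) (r : F ⟶ P), i ≫ r = 𝟙 P

/-- Finite coproducts of shifts of objects of `S`. -/
def finCoprodShifts (S : Set C) : Set C :=
  {X | ∃ (k : ℕ) (obj : Fin k → C) (s : Fin k → ℤ),
    (∀ i, obj i ∈ S) ∧ Nonempty (X ≅ ⨁ (fun i => (obj i)⟦s i⟧))}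

/-- `add S`: retracts of finite coproducts of shifts of objects of `S`, i.e. the
closure of `S` under shifts, finite coproducts and retracts. -/
def addSet (S : Set C) : Set C := {X | ∃ F ∈ finCoprodShifts S, IsRetract X F}

/-- Cones of morphisms from an object of `S` to an object of `T`. -/
def coneSet (S T : Set C) : Set C :=
  {Z | ∃ (A B : C) (f : A ⟶ B) (g : B ⟶ Z) (h : Z ⟶ A⟦(1 : ℤ)⟧),
    A ∈ S ∧ B ∈ T ∧ Triangle.mk f g h ∈ distTriang C}

/-- The level filtration `⟨G⟩_n`: `⟨G⟩_0` consists of zero objects, `⟨G⟩_1 = add G`,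
and `⟨G⟩_n = add (cones of maps from ⟨G⟩_{n-1} to ⟨G⟩_1)`. -/
def levelSet (G : C) : ℕ → Set C
  | 0 => {X | IsZero X}
  | 1 => addSet {G}
  | (n+2) => addSet (coneSet (levelSet G (n+1)) (addSet {G}))

/-- `coprod_n (G(-∞,∞))`: as `levelSet` but without retracts. -/
def coprodLevel (G : C) : ℕ → Set C
  | 0 => {X | IsZero X}
  | 1 => finCoprodShifts {G}
  | (n+2) => coneSet (coprodLevel G (n+1)) (finCoprodShifts {G})

/-- The level of `E` with respect to `G`: the minimal `n` with `E ∈ ⟨G⟩_n`. -/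
noncomputable def levelOf (G E : C) : ℕ∞ :=
  sInf {n : ℕ∞ | ∃ k : ℕ, n = k ∧ E ∈ levelSet G k}

/-- The Rouquier dimension of a (strictly full triangulated) subcategory `S` of `C`,
with levels computed in the ambient category: the least `d` such that
`S ⊆ ⟨G⟩_{d+1}` for some `G ∈ S`. -/
noncomputable def relRouquierDim (S : Set C) : ℕ∞ :=
  sInf {d : ℕ∞ | ∃ (k : ℕ) (G : C), G ∈ S ∧ d = k ∧ S ⊆ levelSet G (k + 1)}

/-- `G` is a strong generator of the (strictly full triangulated) subcategory `S`. -/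
def IsStrongGeneratorOf (S : Set C) (G : C) : Prop :=
  G ∈ S ∧ ∃ n : ℕ, S ⊆ levelSet G n

/-- A morphism `ψ : K ⟶ L` is `G`-ghost if every composition `G⟦n⟧ ⟶ K ⟶ L` vanishes. -/
def IsGhost (G : C) {K L : C} (ψ : K ⟶ L) : Prop :=
  ∀ (n : ℤ) (φ : G⟦n⟧ ⟶ K), φ ≫ ψ = 0

end RouquierApprox

open CategoryTheory Limits Pretriangulated Triangulated RouquierApprox

/-!
Call `φ : F ⟶ F'` `a`-local if precomposing with `φ` is bijective on maps into `T^{≥ a}`.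
Such a map induces isomorphisms on `H^n` for `n ≥ a`, since it identifies the truncations
`τ^{≥ a}`. If `G ∈ T^{≥ m} ∩ T^{≤ n}` and `F = ⨁ G⟦sᵢ⟧`, the projection onto the summands with
`sᵢ ≤ n - a` is `a`-local, as the other summands lie in `T^{≤ a - 1}`, and its target lies in
`T^{≥ a - (n - m)}`. For the cone of `A ⟶ B`, approximate `B` at `a` by `B'`, then `A` by `A'`
at the lower bound of `B'`, so that `A ⟶ B ⟶ B'` factors through `A'`; the induced map from the
cone to the cone of `A' ⟶ B'` is `a`-local by the five lemma for `Hom(-, X)`, and the bounds add.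
-/

namespace CategoryTheory.ObjectProperty

variable {C : Type*} [Category C]

lemma isLocal_shiftFunctor_map {A : Type*} [AddGroup A] [HasShift C A]
    {P Q : ObjectProperty C} (n : A) (hQP : Q ≤ P.shift (-n)) {X Y : C} {f : X ⟶ Y}
    (hf : P.isLocal f) : Q.isLocal (f⟦n⟧') := by
  intro Z hZ
  let e : ∀ W : C, (W⟦n⟧ ⟶ Z) ≃ (W ⟶ Z⟦-n⟧) :=
    fun W => (shiftEquiv C n).toAdjunction.homEquiv W Z
  have h : (fun g : Y⟦n⟧ ⟶ Z => f⟦n⟧' ≫ g) = (e X).symm ∘ (fun g => f ≫ g) ∘ e Y := by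
    funext g
    apply (e X).injective
    simp only [Function.comp_apply, Equiv.apply_symm_apply]
    exact Adjunction.homEquiv_naturality_left _ f g
  rw [h]
  exact ((e X).symm.bijective.comp (hf _ (hQP Z hZ))).comp (e Y).bijective

lemma isLocal_biproduct_toSubtype [Preadditive C] [HasFiniteBiproducts C] {P : ObjectProperty C}
    {ι : Type*} [Finite ι] (f : ι → C) (p : ι → Prop)
    (hp : ∀ i, ¬ p i → P.leftOrthogonal (f i)) :
    P.isLocal (biproduct.toSubtype f p) := by
  classical
  intro Z hZ
  refine ⟨fun g₁ g₂ h => ?_, fun g => ⟨biproduct.fromSubtype f p ≫ g, ?_⟩⟩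
  · simpa using biproduct.fromSubtype f p ≫= h
  · ext i
    by_cases hi : p i
    · simp [hi]
    · simp [hp i hi _ hZ]

variable [Preadditive C] [HasZeroObject C] [HasShift C ℤ]
  [∀ (n : ℤ), (shiftFunctor C n).Additive] [Pretriangulated C]

lemma isLocal_hom₃_of_distTriang {P : ObjectProperty C} {T T' : Triangle C}
    (hT : T ∈ distTriang C) (hT' : T' ∈ distTriang C) (φ : T ⟶ T')
    (h₁ : P.isLocal φ.hom₁) (h₂ : P.isLocal φ.hom₂)
    (h₁' : P.isLocal (φ.hom₁⟦(1 : ℤ)⟧')) (h₂' : P.isLocal (φ.hom₂⟦(1 : ℤ)⟧')) :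
    P.isLocal φ.hom₃ := by
  intro X hX
  refine ⟨fun p₁ p₂ hp => ?_, fun q => ?_⟩
  · suffices h : ∀ p : T'.obj₃ ⟶ X, φ.hom₃ ≫ p = 0 → p = 0 by
      simpa [sub_eq_zero] using h (p₁ - p₂) (by simpa [sub_eq_zero] using hp)
    intro p hp
    have hp₂ : T'.mor₂ ≫ p = 0 := (h₂ X hX).1 (by simp [← φ.comm₂_assoc, hp])
    obtain ⟨s, rfl⟩ := Triangle.yoneda_exact₃ _ hT' p hp₂
    have hs : T.mor₃ ≫ φ.hom₁⟦(1 : ℤ)⟧' ≫ s = 0 := by simpa [φ.comm₃_assoc] using hp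
    obtain ⟨w, hw⟩ : ∃ w, φ.hom₁⟦(1 : ℤ)⟧' ≫ s = (-T.mor₁⟦(1 : ℤ)⟧') ≫ w :=
      Triangle.yoneda_exact₃ _ (rot_of_distTriang _ hT) _ hs
    obtain ⟨w', rfl⟩ := (h₂' X hX).2 w
    have hs' : s = -(T'.mor₁⟦(1 : ℤ)⟧' ≫ w') := by
      apply (h₁' X hX).1
      have hcomm₁ : T.mor₁⟦(1 : ℤ)⟧' ≫ φ.hom₂⟦(1 : ℤ)⟧' = φ.hom₁⟦(1 : ℤ)⟧' ≫ T'.mor₁⟦(1 : ℤ)⟧' := by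
        simp only [← Functor.map_comp, φ.comm₁]
      simp [hw, reassoc_of% hcomm₁]
    simp [hs', reassoc_of% comp_distTriang_mor_zero₃₁ _ hT']
  · obtain ⟨r, hr⟩ := (h₂ X hX).2 (T.mor₂ ≫ q)
    have hr₁ : T'.mor₁ ≫ r = 0 := (h₁ X hX).1 (by
      simp [← φ.comm₁_assoc, hr, reassoc_of% comp_distTriang_mor_zero₁₂ _ hT])
    obtain ⟨p, rfl⟩ := Triangle.yoneda_exact₂ _ hT' r hr₁
    have hq : T.mor₂ ≫ (q - φ.hom₃ ≫ p) = 0 := by simp [φ.comm₂_assoc, hr]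
    obtain ⟨s, hs⟩ := Triangle.yoneda_exact₃ _ hT _ hq
    obtain ⟨s', rfl⟩ := (h₁' X hX).2 s
    refine ⟨p + T'.mor₃ ≫ s', ?_⟩
    dsimp only at hs ⊢
    rw [Preadditive.comp_add, ← φ.comm₃_assoc, ← hs, add_sub_cancel]

end CategoryTheory.ObjectProperty

namespace RouquierApprox

variable {C : Type*} [Category C] [Preadditive C] [HasZeroObject C] [HasShift C ℤ]
  [∀ (n : ℤ), (shiftFunctor C n).Additive] [Pretriangulated C]
  (t : TStructure C)

lemma TruncGETriangle.isLocal_π {a : ℤ} {A : C} (T : TruncGETriangle t a A) :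
    (t.ge a).isLocal T.π := by
  intro X hX
  have : t.IsGE X a := ⟨hX⟩
  have : t.IsLE T.left (a - 1) := ⟨T.left_le⟩
  refine ⟨fun p₁ p₂ hp => ?_, fun q => ?_⟩
  · suffices h : ∀ p : T.right ⟶ X, T.π ≫ p = 0 → p = 0 by
      simpa [sub_eq_zero] using h (p₁ - p₂) (by simpa [sub_eq_zero] using hp)
    intro p hp
    obtain ⟨s, rfl⟩ : ∃ s : T.left⟦(1 : ℤ)⟧ ⟶ X, p = T.δ ≫ s :=
      Triangle.yoneda_exact₃ _ T.dist p hp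
    have : t.IsLE (T.left⟦(1 : ℤ)⟧) (a - 2) := t.isLE_shift _ (a - 1) 1 (a - 2)
    simp [t.zero s (a - 2) a]
  · obtain ⟨p, hp⟩ := Triangle.yoneda_exact₂ _ T.dist q (t.zero (T.ι ≫ q) (a - 1) a)
    exact ⟨p, hp.symm⟩

lemma isIsoInDegreesGE_of_isLocal {a : ℤ} {A B : C} {φ : A ⟶ B} (hφ : (t.ge a).isLocal φ) :
    IsIsoInDegreesGE t a φ := by
  intro TA TB g hg
  have hπg : (t.ge a).isLocal (TA.π ≫ g) :=
    hg ▸ MorphismProperty.comp_mem _ _ _ hφ (TB.isLocal_π t)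
  exact ((t.ge a).isLocal_iff_isIso g TA.right_ge TB.right_ge).1
    (MorphismProperty.of_precomp _ _ _ (TA.isLocal_π t) hπg)

lemma isLocal_ge_shiftFunctor_map_one {a : ℤ} {A B : C} {φ : A ⟶ B} (hφ : (t.ge a).isLocal φ) :
    (t.ge a).isLocal (φ⟦(1 : ℤ)⟧') :=
  ObjectProperty.isLocal_shiftFunctor_map 1
    (fun _ hZ => t.ge_antitone (by omega) _ (t.ge_shift a (-1) (a + 1) (by omega) _ hZ)) hφ

lemma isGE_biproduct {ι : Type*} [Finite ι] (f : ι → C) (n : ℤ) (h : ∀ i, t.IsGE (f i) n) :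
    t.IsGE (⨁ f) n :=
  (t.isGE_iff_orthogonal (n - 1) n (by omega) _).2 fun Y g _ =>
    biproduct.hom_ext _ _ fun i => by simp [t.zero (g ≫ biproduct.π f i) (n - 1) n]

lemma biproduct_mem_finCoprodShifts {S : Set C} {ι : Type*} [Fintype ι] (obj : ι → C)
    (s : ι → ℤ) (hobj : ∀ i, obj i ∈ S) : (⨁ fun i => (obj i)⟦s i⟧) ∈ finCoprodShifts S :=
  let e := Fintype.equivFin ι
  ⟨_, obj ∘ e.symm, s ∘ e.symm, fun _ => hobj _,
    ⟨biproduct.whiskerEquiv e fun i => eqToIso (by simp)⟩⟩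

def HasGEApproximations (S : Set C) (N : ℤ) : Prop :=
  ∀ (a : ℤ) (F : C), F ∈ S →
    ∃ (F' : C) (φ : F ⟶ F'), F' ∈ S ∧ t.IsGE F' (a - N) ∧ (t.ge a).isLocal φ

lemma hasGEApproximations_finCoprodShifts (G : C) (m n : ℤ) [t.IsGE G m] [t.IsLE G n] :
    HasGEApproximations t (finCoprodShifts {G}) (n - m) := by
  classical
  rintro a F ⟨k, obj, s, hobj, ⟨e⟩⟩
  obtain rfl : obj = fun _ => G := funext hobj
  let keep : Fin k → Prop := fun i => s i ≤ n - a
  refine ⟨_, e.hom ≫ biproduct.toSubtype _ keep,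
    biproduct_mem_finCoprodShifts (fun _ : Subtype keep => G) (fun i => s i) fun _ => rfl,
    isGE_biproduct t _ _ fun i => ?_, MorphismProperty.comp_mem _ _ _
      ((t.ge a).isLocal_of_isIso e.hom) (ObjectProperty.isLocal_biproduct_toSubtype _ _ ?_)⟩
  · show t.IsGE (G⟦s i⟧) _
    have := t.isGE_shift G m (s i) (m - s i)
    exact t.isGE_of_ge _ _ (m - s i) (by have := i.2; simp only [keep] at this; omega)
  · intro i hi Z g hZ
    have : t.IsGE Z a := ⟨hZ⟩
    have := t.isLE_shift G n (s i) (n - s i)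
    exact t.zero (g : G⟦s i⟧ ⟶ Z) (n - s i) a (by simp only [keep] at hi; omega)

lemma HasGEApproximations.coneSet {S S' : Set C} {N M : ℤ} (hS : HasGEApproximations t S N)
    (hS' : HasGEApproximations t S' M) (hN : 0 ≤ N) (hM : 0 ≤ M) :
    HasGEApproximations t (coneSet S S') (M + N + 1) := by
  rintro a F ⟨A, B, u, g, h, hA, hB, hT⟩
  obtain ⟨B', ψ, hB', _, hψ⟩ := hS' a B hB
  obtain ⟨A', α, hA', _, hα⟩ := hS (a - M) A hA
  obtain ⟨β, hβ⟩ := (hα B' (t.ge_of_isGE _ _)).2 (u ≫ ψ)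
  obtain ⟨F', g', h', hT'⟩ := distinguished_cocone_triangle β
  obtain ⟨φ, hφ₂, hφ₃⟩ := complete_distinguished_triangle_morphism _ _ hT hT' α ψ hβ.symm
  have : t.IsGE (A'⟦(1 : ℤ)⟧) (a - (M + N + 1)) := t.isGE_shift A' (a - M - N) 1 _
  have : t.IsGE B' (a - (M + N + 1)) := t.isGE_of_ge B' _ (a - M)
  have hα' : (t.ge a).isLocal α := fun Z hZ => hα Z (t.ge_antitone (by omega) Z hZ)
  refine ⟨F', φ, ⟨A', B', β, g', h', hA', hB', hT'⟩,
    t.isGE₂ _ (rot_of_distTriang _ hT') _ ‹_› ‹_›, ?_⟩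
  exact ObjectProperty.isLocal_hom₃_of_distTriang hT hT'
    (Triangle.homMk _ _ α ψ φ hβ.symm hφ₂ hφ₃) hα' hψ
    (isLocal_ge_shiftFunctor_map_one t hα') (isLocal_ge_shiftFunctor_map_one t hψ)

lemma exists_hasGEApproximations_coprodLevel (G : C) (m n : ℤ) [t.IsGE G m] [t.IsLE G n]
    (hmn : m ≤ n) (k : ℕ) : ∃ N, 0 ≤ N ∧ HasGEApproximations t (coprodLevel G (k + 1)) N := by
  induction k with
  | zero => exact ⟨n - m, by omega, hasGEApproximations_finCoprodShifts t G m n⟩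
  | succ k ih =>
    obtain ⟨N, hN, hk⟩ := ih
    exact ⟨n - m + N + 1, by omega,
      hk.coneSet t (hasGEApproximations_finCoprodShifts t G m n) hN (by omega)⟩

end RouquierApprox

/-- Lemma 3.4. Let `T` be a triangulated category with a bounded
t-structure, `G` an object and `d > 0`. There exists `N = N(d) > 0` such that for
every integer `a` and every `F ∈ coprod_d(G(-∞,∞))` there are
`F' ∈ coprod_d(G(-∞,∞)) ∩ T^{≥ a - N}` and a map `F ⟶ F'` which is an isomorphism
in degrees `≥ a`. -/
theorem statement3 {C : Type*} [Category C] [Preadditive C] [HasZeroObject C] [HasShift C ℤ]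
    [∀ (n : ℤ), (shiftFunctor C n).Additive] [Pretriangulated C]
    (t : TStructure C) (hb : IsBoundedTStructure t)
    (G : C) (d : ℕ) (hd : 0 < d) :
    ∃ N : ℤ, 0 < N ∧ ∀ (a : ℤ) (F : C), F ∈ coprodLevel G d →
      ∃ (F' : C) (φ : F ⟶ F'),
        F' ∈ coprodLevel G d ∧ t.ge (a - N) F' ∧ IsIsoInDegreesGE t a φ := by
  obtain ⟨n, hn, hle, hge⟩ := hb G
  have : t.IsLE G n := ⟨hle⟩
  have : t.IsGE G (-n) := ⟨hge⟩
  obtain ⟨k, rfl⟩ : ∃ k, d = k + 1 := ⟨d - 1, by omega⟩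
  obtain ⟨N, hN, happrox⟩ := exists_hasGEApproximations_coprodLevel t G (-n) n (by omega) k
  refine ⟨N + 1, by omega, fun a F hF => ?_⟩
  obtain ⟨F', φ, hF', _, hφ⟩ := happrox a F hF
  have := t.isGE_of_ge F' (a - (N + 1)) (a - N)
  exact ⟨F', φ, hF', t.ge_of_isGE _ _, isIsoInDegreesGE_of_isLocal t hφ⟩
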